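/- arXiv:1107.0140 — 9 statements merged into one kernel-verified Lean document; each statement's English description precedes it below -/
import Mathlib

section
/- In E^n, any collection of n+2 vectors cannot be pairwise obtuse; that is, for any vectors u_1, ..., u_{n+2} in E^n there exist indices i ≠ j with u_i · u_j ≥ 0. -/
open scoped RealInnerProductSpace
open Finset

theorem no_pairwise_obtuse_of_card (n : ℕ)
    (u : Fin (n + 2) → EuclideanSpace ℝ (Fin n)) :
    ∃ i j, i ≠ j ∧ 0 ≤ ⟪u i, u j⟫ := by
  by_contra hcon
  push_neg at hcon
  have h : ∀ i j : Fin (n + 2), i ≠ j → ⟪u i, u j⟫ < 0 := hcon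
  set v : Fin (n + 1) → EuclideanSpace ℝ (Fin n) := fun i => u i.castSucc with hv
  set w : EuclideanSpace ℝ (Fin n) := u (Fin.last (n + 1)) with hw
  have hvw : ∀ i : Fin (n + 1), ⟪v i, w⟫ < 0 := fun i =>
    h _ _ (by simp [Fin.castSucc_lt_last i |>.ne])
  have hvv : ∀ i j : Fin (n + 1), i ≠ j → ⟪v i, v j⟫ < 0 := fun i j hij =>
    h _ _ (by simpa using hij)
  have hli : LinearIndependent ℝ v := by
    rw [Fintype.linearIndependent_iff]
    intro g hg i0
    set Sp := Finset.univ.filter (fun i => 0 < g i) with hSp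
    set Sn := Finset.univ.filter (fun i => g i < 0) with hSn
    set P : EuclideanSpace ℝ (Fin n) := ∑ i ∈ Sp, g i • v i with hP
    set N : EuclideanSpace ℝ (Fin n) := ∑ i ∈ Sn, (-g i) • v i with hN
    have hnN : -N = ∑ i ∈ Sn, g i • v i := by
      rw [hN, ← Finset.sum_neg_distrib]
      exact Finset.sum_congr rfl (fun i _ => by rw [neg_smul, neg_neg])
    have h2 : ∑ i ∈ univ.filter (fun i => ¬ 0 < g i), g i • v i = -N := by
      rw [hnN]
      refine (Finset.sum_subset ?_ ?_).symm
      · intro i hi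
        simp only [hSn, mem_filter, mem_univ, true_and] at hi ⊢
        linarith
      · intro i hi hni
        simp only [hSn, mem_filter, mem_univ, true_and, not_lt] at hi hni
        have : g i = 0 := le_antisymm (by simpa using hi) hni
        simp [this]
    have hPN : P = N := by
      have h1 : ∑ i ∈ Sp, g i • v i + ∑ i ∈ univ.filter (fun i => ¬ 0 < g i), g i • v i = 0 := by
        rw [Finset.sum_filter_add_sum_filter_not]; exact hg
      rw [h2] at h1
      have : P - N = 0 := by rw [sub_eq_add_neg]; exact h1
      exact sub_eq_zero.mp this
    have hinner : ⟪P, N⟫ ≤ 0 := by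
      rw [hP, hN, sum_inner]
      apply Finset.sum_nonpos
      intro i hi
      rw [inner_sum]
      apply Finset.sum_nonpos
      intro j hj
      rw [real_inner_smul_left, real_inner_smul_right]
      simp only [hSp, hSn, mem_filter, mem_univ, true_and] at hi hj
      have hij : i ≠ j := fun e => absurd (e ▸ hi) (asymm hj)
      exact (mul_neg_of_pos_of_neg hi
        (mul_neg_of_pos_of_neg (neg_pos.mpr hj) (hvv i j hij))).le
    have hP0 : P = 0 := by
      rw [← real_inner_self_nonpos]
      calc ⟪P, P⟫ = ⟪P, N⟫ := by rw [hPN]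
        _ ≤ 0 := hinner
    have hN0 : N = 0 := hPN ▸ hP0
    have hSpe : Sp = ∅ := by
      by_contra hne
      obtain ⟨i, hi⟩ := Finset.nonempty_of_ne_empty hne
      have hzero : ⟪P, w⟫ = 0 := by rw [hP0, inner_zero_left]
      rw [hP, sum_inner] at hzero
      have hlt : ∑ i ∈ Sp, ⟪g i • v i, w⟫ < 0 := by
        apply Finset.sum_neg
        · intro j hj
          rw [real_inner_smul_left]
          simp only [hSp, mem_filter, mem_univ, true_and] at hj
          exact mul_neg_of_pos_of_neg hj (hvw j)
        · exact ⟨i, hi⟩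
      linarith [hzero ▸ hlt]
    have hSne : Sn = ∅ := by
      by_contra hne
      obtain ⟨i, hi⟩ := Finset.nonempty_of_ne_empty hne
      have hzero : ⟪N, w⟫ = 0 := by rw [hN0, inner_zero_left]
      rw [hN, sum_inner] at hzero
      have hlt : ∑ i ∈ Sn, ⟪(-g i) • v i, w⟫ < 0 := by
        apply Finset.sum_neg
        · intro j hj
          rw [real_inner_smul_left]
          simp only [hSn, mem_filter, mem_univ, true_and] at hj
          exact mul_neg_of_pos_of_neg (by linarith) (hvw j)
        · exact ⟨i, hi⟩
      linarith [hzero ▸ hlt]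
    have h1 : ¬ 0 < g i0 := by
      intro hgt
      have : i0 ∈ Sp := by simp [hSp, hgt]
      rw [hSpe] at this; exact absurd this (Finset.notMem_empty i0)
    have h2' : ¬ g i0 < 0 := by
      intro hlt
      have : i0 ∈ Sn := by simp [hSn, hlt]
      rw [hSne] at this; exact absurd this (Finset.notMem_empty i0)
    linarith [not_lt.mp h1, not_lt.mp h2']
  have := hli.fintype_card_le_finrank
  simp [finrank_euclideanSpace_fin] at this
end

section
/- Given an expansion q of p in E^d, the family of maps f_i(t) = ((p_i+q_i)/2 + cos(πt)·(p_i-q_i)/2, sin(πt)·(p_i-q_i)/2) into E^{2d} = E^d × E^d is a continuous expansion from p to q: each f_i is continuous, f_i(0) = (p_i, 0), f_i(1) = (q_i, 0), and for all i < j the function t ↦ |f_i(t) - f_j(t)| is non-decreasing on [0,1]. -/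
open scoped RealInnerProductSpace

/-!
The difference `f i t - f j t` is the same semicircle construction applied to `P = p i - p j` and
`Q = q i - q j`, and its squared length is the convex combination
`((1 + cos πt) / 2) ‖P‖² + ((1 - cos πt) / 2) ‖Q‖²`. Since `cos πt` decreases on `[0, 1]`, this
moves monotonically from `‖P‖²` to `‖Q‖²` as soon as `‖P‖ ≤ ‖Q‖`.
-/

namespace EuclideanGeometry

variable {E : Type*} [NormedAddCommGroup E] [InnerProductSpace ℝ E]

/-- The half circle from `(a, 0)` to `(b, 0)` centred at `((a + b) / 2, 0)`, obtained by rotating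
the radius `(a - b) / 2` out of `E × 0` through `0 × E`. -/
noncomputable def semicirclePath (a b : E) (t : ℝ) : WithLp 2 (E × E) :=
  WithLp.toLp 2 ((1 / 2 : ℝ) • (a + b) + Real.cos (Real.pi * t) • ((1 / 2 : ℝ) • (a - b)),
    Real.sin (Real.pi * t) • ((1 / 2 : ℝ) • (a - b)))

theorem continuous_semicirclePath (a b : E) : Continuous (semicirclePath a b) :=
  (WithLp.prod_continuous_toLp ..).comp (by fun_prop)

theorem semicirclePath_zero (a b : E) : semicirclePath a b 0 = WithLp.toLp 2 (a, 0) := by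
  simp only [semicirclePath, mul_zero, Real.cos_zero, Real.sin_zero, one_smul, zero_smul]
  congr 2
  module

theorem semicirclePath_one (a b : E) : semicirclePath a b 1 = WithLp.toLp 2 (b, 0) := by
  simp only [semicirclePath, mul_one, Real.cos_pi, Real.sin_pi, neg_one_smul, zero_smul]
  congr 2
  module

theorem semicirclePath_sub (a b a' b' : E) (t : ℝ) :
    semicirclePath a b t - semicirclePath a' b' t = semicirclePath (a - a') (b - b') t := by
  simp only [semicirclePath, ← WithLp.toLp_sub, Prod.mk_sub_mk]
  congr 2 <;> module

theorem norm_semicirclePath_sq (a b : E) (t : ℝ) :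
    ‖semicirclePath a b t‖ ^ 2 =
      (1 + Real.cos (Real.pi * t)) / 2 * ‖a‖ ^ 2 + (1 - Real.cos (Real.pi * t)) / 2 * ‖b‖ ^ 2 := by
  rw [semicirclePath, WithLp.prod_norm_sq_eq_of_L2]
  simp only [WithLp.toLp_fst, WithLp.toLp_snd, ← real_inner_self_eq_norm_sq, inner_add_left,
    inner_add_right, inner_sub_left, inner_sub_right, real_inner_smul_left, real_inner_smul_right,
    real_inner_comm a b]
  -- the coefficient is the squared radius `‖(a - b) / 2‖ ^ 2`
  linear_combination (⟪a, a⟫ - 2 * ⟪a, b⟫ + ⟪b, b⟫) / 4 * Real.sin_sq_add_cos_sq (Real.pi * t)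

theorem monotoneOn_norm_semicirclePath {a b : E} (hab : ‖a‖ ≤ ‖b‖) :
    MonotoneOn (fun t => ‖semicirclePath a b t‖) (Set.Icc 0 1) := by
  intro s hs t ht hst
  have hcos : Real.cos (Real.pi * t) ≤ Real.cos (Real.pi * s) :=
    Real.cos_le_cos_of_nonneg_of_le_pi (by nlinarith [Real.pi_pos, hs.1])
      (by nlinarith [Real.pi_pos, ht.2]) (by nlinarith [Real.pi_pos])
  have hsq : ‖a‖ ^ 2 ≤ ‖b‖ ^ 2 := pow_le_pow_left₀ (norm_nonneg a) hab 2
  refine (pow_le_pow_iff_left₀ (norm_nonneg _) (norm_nonneg _) two_ne_zero).mp ?_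
  rw [norm_semicirclePath_sq, norm_semicirclePath_sq]
  nlinarith

end EuclideanGeometry

open EuclideanGeometry in
theorem continuous_expansion_in_double_dimension (d N : ℕ)
    (p q : Fin N → EuclideanSpace ℝ (Fin d))
    (hexp : ∀ i j : Fin N, i < j → ‖p i - p j‖ ≤ ‖q i - q j‖)
    (f : Fin N → ℝ → WithLp 2 (EuclideanSpace ℝ (Fin d) × EuclideanSpace ℝ (Fin d)))
    (hf : ∀ i t, f i t =
      (WithLp.equiv 2 (EuclideanSpace ℝ (Fin d) × EuclideanSpace ℝ (Fin d))).symm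
        ((1 / 2 : ℝ) • (p i + q i) + Real.cos (Real.pi * t) • ((1 / 2 : ℝ) • (p i - q i)),
         Real.sin (Real.pi * t) • ((1 / 2 : ℝ) • (p i - q i)))) :
    (∀ i, Continuous (f i)) ∧
    (∀ i, f i 0 =
      (WithLp.equiv 2 (EuclideanSpace ℝ (Fin d) × EuclideanSpace ℝ (Fin d))).symm (p i, 0)) ∧
    (∀ i, f i 1 =
      (WithLp.equiv 2 (EuclideanSpace ℝ (Fin d) × EuclideanSpace ℝ (Fin d))).symm (q i, 0)) ∧
    (∀ i j : Fin N, i < j →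
      MonotoneOn (fun t => ‖f i t - f j t‖) (Set.Icc (0 : ℝ) 1)) := by
  have hf_eq : ∀ i, f i = semicirclePath (p i) (q i) := fun i => funext (hf i)
  simp only [hf_eq, WithLp.equiv_symm_apply, semicirclePath_sub]
  exact ⟨fun i => continuous_semicirclePath _ _, fun i => semicirclePath_zero _ _,
    fun i => semicirclePath_one _ _, fun i j hij => monotoneOn_norm_semicirclePath (hexp i j hij)⟩
end

section
/- For f_i(t) = ((p_i+q_i)/2 + cos(πt)·(p_i-q_i)/2, sin(πt)·(p_i-q_i)/2) in E^d × E^d, one has the identity 4|f_i(t) - f_j(t)|² = |(p_i-p_j)-(q_i-q_j)|² + |(p_i-p_j)+(q_i-q_j)|² + 2cos(πt)·(|p_i-p_j|² - |q_i-q_j|²). -/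
open scoped RealInnerProductSpace

theorem norm_identity_for_motion (d N : ℕ)
    (p q : Fin N → EuclideanSpace ℝ (Fin d))
    (f : Fin N → ℝ → WithLp 2 (EuclideanSpace ℝ (Fin d) × EuclideanSpace ℝ (Fin d)))
    (hf : ∀ i t, f i t =
      (WithLp.equiv 2 (EuclideanSpace ℝ (Fin d) × EuclideanSpace ℝ (Fin d))).symm
        ((1 / 2 : ℝ) • (p i + q i) + Real.cos (Real.pi * t) • ((1 / 2 : ℝ) • (p i - q i)),
         Real.sin (Real.pi * t) • ((1 / 2 : ℝ) • (p i - q i)))) :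
    ∀ (i j : Fin N) (t : ℝ),
      4 * ‖f i t - f j t‖ ^ 2 =
        ‖(p i - p j) - (q i - q j)‖ ^ 2 + ‖(p i - p j) + (q i - q j)‖ ^ 2 +
          2 * Real.cos (Real.pi * t) * (‖p i - p j‖ ^ 2 - ‖q i - q j‖ ^ 2) := by
  intro i j t
  rw [hf, hf]
  set P := p i - p j with hP
  set Q := q i - q j with hQ
  set c := Real.cos (Real.pi * t) with hc
  set s := Real.sin (Real.pi * t) with hs
  have h1 : (1 / 2 : ℝ) • (p i + q i) + c • ((1 / 2 : ℝ) • (p i - q i)) -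
      ((1 / 2 : ℝ) • (p j + q j) + c • ((1 / 2 : ℝ) • (p j - q j))) =
      (1 / 2 : ℝ) • (P + Q) + c • ((1 / 2 : ℝ) • (P - Q)) := by
    rw [hP, hQ]; module
  have h2 : s • ((1 / 2 : ℝ) • (p i - q i)) - s • ((1 / 2 : ℝ) • (p j - q j)) =
      s • ((1 / 2 : ℝ) • (P - Q)) := by
    rw [hP, hQ]; module
  have hsub : (WithLp.equiv 2 (EuclideanSpace ℝ (Fin d) × EuclideanSpace ℝ (Fin d))).symm
        ((1 / 2 : ℝ) • (p i + q i) + c • ((1 / 2 : ℝ) • (p i - q i)),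
         s • ((1 / 2 : ℝ) • (p i - q i))) -
      (WithLp.equiv 2 (EuclideanSpace ℝ (Fin d) × EuclideanSpace ℝ (Fin d))).symm
        ((1 / 2 : ℝ) • (p j + q j) + c • ((1 / 2 : ℝ) • (p j - q j)),
         s • ((1 / 2 : ℝ) • (p j - q j))) =
      (WithLp.equiv 2 (EuclideanSpace ℝ (Fin d) × EuclideanSpace ℝ (Fin d))).symm
        ((1 / 2 : ℝ) • (P + Q) + c • ((1 / 2 : ℝ) • (P - Q)),
         s • ((1 / 2 : ℝ) • (P - Q))) := by
    rw [← h1, ← h2]; rfl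
  rw [hsub, WithLp.prod_norm_sq_eq_of_L2]
  have hfst : ((WithLp.equiv 2 (EuclideanSpace ℝ (Fin d) × EuclideanSpace ℝ (Fin d))).symm
        ((1 / 2 : ℝ) • (P + Q) + c • ((1 / 2 : ℝ) • (P - Q)),
         s • ((1 / 2 : ℝ) • (P - Q)))).fst =
      (1 / 2 : ℝ) • (P + Q) + c • ((1 / 2 : ℝ) • (P - Q)) := rfl
  have hsnd : ((WithLp.equiv 2 (EuclideanSpace ℝ (Fin d) × EuclideanSpace ℝ (Fin d))).symm
        ((1 / 2 : ℝ) • (P + Q) + c • ((1 / 2 : ℝ) • (P - Q)),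
         s • ((1 / 2 : ℝ) • (P - Q)))).snd =
      s • ((1 / 2 : ℝ) • (P - Q)) := rfl
  rw [hfst, hsnd]
  simp only [← real_inner_self_eq_norm_sq, inner_add_left, inner_add_right, inner_sub_left,
    inner_sub_right, real_inner_smul_left, real_inner_smul_right]
  linear_combination (⟪P, P⟫ - ⟪P, Q⟫ - ⟪Q, P⟫ + ⟪Q, Q⟫) * Real.sin_sq_add_cos_sq (Real.pi * t)
end

section
/- If (u_1, u_2, u_3, u_4) is a parallelogram in E^n and (v_1, v_2, v_3, v_4) is a configuration in E^n with |u_i - u_j| = |v_i - v_j| for all i ≠ j, then (v_1, v_2, v_3, v_4) is also a parallelogram; in particular v_1 + v_3 = v_2 + v_4. -/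
theorem parallelogram_rigidity (n : ℕ)
    (u v : Fin 4 → EuclideanSpace ℝ (Fin n))
    (hpara : u 0 + u 2 = u 1 + u 3)
    (hdist : ∀ i j, i ≠ j → ‖u i - u j‖ = ‖v i - v j‖) :
    v 0 + v 2 = v 1 + v 3 := by
  have key : ∀ a b c d : EuclideanSpace ℝ (Fin n),
      ‖a + c - (b + d)‖ ^ 2 =
        ‖a - b‖ ^ 2 + ‖b - c‖ ^ 2 + ‖c - d‖ ^ 2 + ‖d - a‖ ^ 2
          - ‖a - c‖ ^ 2 - ‖b - d‖ ^ 2 := by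
    intro a b c d
    simp only [norm_sub_sq_real, norm_add_sq_real, inner_add_left, inner_add_right]
    rw [real_inner_comm d a, real_inner_comm c b]
    ring
  have hu : ‖u 0 + u 2 - (u 1 + u 3)‖ ^ 2 = 0 := by
    rw [hpara]; simp
  have hv : ‖v 0 + v 2 - (v 1 + v 3)‖ ^ 2 = 0 := by
    rw [key]
    rw [key] at hu
    rw [hdist 0 1 (by decide), hdist 1 2 (by decide), hdist 2 3 (by decide),
        hdist 3 0 (by decide), hdist 0 2 (by decide), hdist 1 3 (by decide)] at hu
    exact hu
  have := (pow_eq_zero_iff (n := 2) (by norm_num)).mp hv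
  rw [norm_eq_zero] at this
  exact sub_eq_zero.mp this
end

section
/- With b^i_j = u_j + s·u_i and c^i_j = u_j - s·u_i as above, if i = l or j = k (with i ≠ j and k ≠ l and (i,j) ≠ (k,l)), then |b^i_j - b^k_l| < |c^i_j - c^k_l|. -/
open scoped RealInnerProductSpace

theorem flap_distance_strict_cases (d : ℕ) (hd : 2 ≤ d) (s : ℝ) (hs : 0 < s)
    (u : Fin (d + 1) → EuclideanSpace ℝ (Fin d))
    (hnorm : ∀ i, ‖u i‖ = 1)
    (hinner : ∀ i j, i ≠ j → ⟪u i, u j⟫ = -1 / d) :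
    ∀ i j k l : Fin (d + 1), i ≠ j → k ≠ l → (i, j) ≠ (k, l) →
      (i = l ∨ j = k) →
      ‖(u j + s • u i) - (u l + s • u k)‖ < ‖(u j - s • u i) - (u l - s • u k)‖ := by
  intro i j k l hij hkl hne hcase
  have hself : ∀ x, ⟪u x, u x⟫ = (1:ℝ) := by
    intro x
    rw [real_inner_self_eq_norm_sq, hnorm]; norm_num
  have hd' : (2:ℝ) ≤ d := by exact_mod_cast hd
  have h1d : (0:ℝ) < 1 / d := by positivity
  have key : ⟪u j - u l, u i - u k⟫ < 0 := by
    have hexp : ⟪u j - u l, u i - u k⟫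
        = ⟪u j, u i⟫ - ⟪u j, u k⟫ - ⟪u l, u i⟫ + ⟪u l, u k⟫ := by
      rw [inner_sub_left, inner_sub_right, inner_sub_right]; ring
    rcases hcase with rfl | rfl
    · -- i = l
      have hki : k ≠ i := hkl
      by_cases hjk : j = k
      · subst hjk
        rw [hexp, hself, hself, hinner j i hij.symm, hinner i j hij]
        rw [neg_div] at *
        linarith
      · rw [hexp, hself, hinner j i hij.symm, hinner j k hjk, hinner i k hki.symm]
        rw [neg_div] at *
        linarith
    · -- j = k
      by_cases hil : i = l
      · subst hil
        rw [hexp, hself, hself, hinner j i hij.symm, hinner i j hij]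
        rw [neg_div] at *
        linarith
      · rw [hexp, hself, hinner j i hij.symm, hinner l i (fun h => hil h.symm),
            hinner l j (fun h => hkl h.symm)]
        rw [neg_div] at *
        linarith
  obtain ⟨v, hv⟩ : ∃ v, u j - u l = v := ⟨_, rfl⟩
  obtain ⟨w, hw⟩ : ∃ w, u i - u k = w := ⟨_, rfl⟩
  rw [hv, hw] at key
  have e1 : (u j + s • u i) - (u l + s • u k) = v + s • w := by
    rw [← hv, ← hw, smul_sub]; abel
  have e2 : (u j - s • u i) - (u l - s • u k) = v - s • w := by
    rw [← hv, ← hw, smul_sub]; abel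
  rw [e1, e2]
  have hsq : ‖v + s • w‖ ^ 2 < ‖v - s • w‖ ^ 2 := by
    rw [norm_add_sq_real, norm_sub_sq_real, real_inner_smul_right]
    nlinarith [key, hs]
  exact lt_of_pow_lt_pow_left₀ 2 (norm_nonneg _) hsq
end

section
/- The outward-flap configuration q is an expansion of the inward-flap configuration p: for the regular simplex with unit vertices u_0,...,u_d centered at the origin and s > 0, every pairwise distance among the points {u_i} ∪ {b^i_j} is less than or equal to the corresponding pairwise distance among {u_i} ∪ {c^i_j}. -/
open scoped RealInnerProductSpace

lemma aux_norm_add_le_sub {E : Type*} [NormedAddCommGroup E] [InnerProductSpace ℝ E]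
    {x y : E} (h : ⟪x, y⟫ ≤ 0) : ‖x + y‖ ≤ ‖x - y‖ := by
  have h2 : ‖x + y‖ ^ 2 ≤ ‖x - y‖ ^ 2 := by
    rw [norm_add_sq_real, norm_sub_sq_real]; linarith
  nlinarith [norm_nonneg (x + y), norm_nonneg (x - y)]

theorem outward_config_is_expansion (d : ℕ) (hd : 1 ≤ d) (s : ℝ) (hs : 0 < s)
    (u : Fin (d + 1) → EuclideanSpace ℝ (Fin d))
    (hnorm : ∀ i, ‖u i‖ = 1)
    (hinner : ∀ i j, i ≠ j → ⟪u i, u j⟫ = -1 / d) :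
    (∀ k i j : Fin (d + 1), i ≠ j →
      ‖u k - (u j + s • u i)‖ ≤ ‖u k - (u j - s • u i)‖) ∧
    (∀ i j k l : Fin (d + 1), i ≠ j → k ≠ l →
      ‖(u j + s • u i) - (u l + s • u k)‖ ≤ ‖(u j - s • u i) - (u l - s • u k)‖) := by
  have hd' : (1 : ℝ) ≤ (d : ℝ) := by exact_mod_cast hd
  have hge : ∀ i j : Fin (d + 1), -1 / (d : ℝ) ≤ ⟪u i, u j⟫ := by
    intro i j
    rcases eq_or_ne i j with rfl | hij
    · rw [real_inner_self_eq_norm_sq, hnorm]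
      have h0 : -1 / (d : ℝ) ≤ 0 := by apply div_nonpos_of_nonpos_of_nonneg <;> norm_num
      linarith
    · rw [hinner i j hij]
  constructor
  · intro k i j hij
    have h1 : ⟪u k - u j, -(s • u i)⟫ ≤ 0 := by
      rw [inner_neg_right, inner_sub_left, inner_smul_right, inner_smul_right]
      have := hge k i
      have h2 := hinner j i (Ne.symm hij)
      nlinarith
    have := aux_norm_add_le_sub h1
    have e1 : u k - u j + -(s • u i) = u k - (u j + s • u i) := by abel
    have e2 : u k - u j - -(s • u i) = u k - (u j - s • u i) := by abel
    rwa [e1, e2] at this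
  · intro i j k l hij hkl
    have h1 : ⟪u j - u l, s • (u i - u k)⟫ ≤ 0 := by
      rw [inner_smul_right, inner_sub_left, inner_sub_right, inner_sub_right]
      have h2 := hinner j i (Ne.symm hij)
      have h3 := hinner l k (Ne.symm hkl)
      have h4 := hge j k
      have h5 := hge l i
      nlinarith
    have := aux_norm_add_le_sub h1
    have e1 : u j - u l + s • (u i - u k) = (u j + s • u i) - (u l + s • u k) := by
      rw [smul_sub]; abel
    have e2 : u j - u l - s • (u i - u k) = (u j - s • u i) - (u l - s • u k) := by
      rw [smul_sub]; abel
    rwa [e1, e2] at this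
end

section
/- If vectors d_0,...,d_d in E^{2d-1} = E^d × E^{d-1} satisfy |d_k| = s, d_k · d_j = -s²/d for all k ≠ j, and the first projection π_1(d_k) = a_k·u_k with |a_k| < s (where u_0,...,u_d are the unit vertices of a regular simplex in E^d with u_i·u_j = -1/d), then the second projections w_k = π_2(d_k) ∈ E^{d-1} are nonzero and pairwise obtuse: w_i · w_j < 0 for all i ≠ j. -/
open scoped RealInnerProductSpace

/-! The splitting `E^{2d-1} = E^d × E^{d-1}` is orthogonal, so `|π₂ d_k|² = s² - a_k² > 0` and
`π₂ d_i · π₂ d_j = d_i · d_j - a_i a_j (u_i · u_j) = (a_i a_j - s²) / d < 0`, because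
`a_i a_j ≤ |a_i| |a_j| < s²`. -/

theorem mul_lt_sq_of_abs_lt {α : Type*} [Ring α] [LinearOrder α] [IsStrictOrderedRing α]
    {a b s : α} (ha : |a| < s) (hb : |b| < s) : a * b < s ^ 2 :=
  calc a * b ≤ |a| * |b| := (le_abs_self _).trans (abs_mul a b).le
    _ < s * s := mul_lt_mul'' ha hb (abs_nonneg a) (abs_nonneg b)
    _ = s ^ 2 := (sq s).symm

namespace WithLp

theorem prod_snd_ne_zero_of_norm_fst_lt {E F : Type*} [SeminormedAddCommGroup E]
    [SeminormedAddCommGroup F] {x : WithLp 2 (E × F)} (h : ‖x.fst‖ < ‖x‖) : x.snd ≠ 0 := by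
  intro hx
  have hsq := prod_norm_sq_eq_of_L2 x
  rw [hx, norm_zero] at hsq
  nlinarith [norm_nonneg x.fst]

theorem prod_inner_snd {𝕜 E F : Type*} [RCLike 𝕜] [NormedAddCommGroup E]
    [InnerProductSpace 𝕜 E] [NormedAddCommGroup F] [InnerProductSpace 𝕜 F]
    (x y : WithLp 2 (E × F)) : inner 𝕜 x.snd y.snd = inner 𝕜 x y - inner 𝕜 x.fst y.fst := by
  rw [prod_inner_apply, ofLp_fst, ofLp_fst, ofLp_snd, ofLp_snd, add_sub_cancel_left]

end WithLp

theorem projections_pairwise_obtuse_general (d : ℕ) (hd : 2 ≤ d) (s : ℝ)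
    (u : Fin (d + 1) → EuclideanSpace ℝ (Fin d))
    (hnorm : ∀ i, ‖u i‖ = 1)
    (hinner : ∀ i j, i ≠ j → ⟪u i, u j⟫ = -1 / d)
    (D : Fin (d + 1) → WithLp 2 (EuclideanSpace ℝ (Fin d) × EuclideanSpace ℝ (Fin (d - 1))))
    (a : Fin (d + 1) → ℝ)
    (hDnorm : ∀ k, ‖D k‖ = s)
    (hDinner : ∀ k j, k ≠ j → ⟪D k, D j⟫ = -s ^ 2 / d)
    (hproj : ∀ k, (WithLp.equiv 2
      (EuclideanSpace ℝ (Fin d) × EuclideanSpace ℝ (Fin (d - 1))) (D k)).1 = a k • u k)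
    (ha : ∀ k, |a k| < s) :
    (∀ k, (WithLp.equiv 2
      (EuclideanSpace ℝ (Fin d) × EuclideanSpace ℝ (Fin (d - 1))) (D k)).2 ≠ 0) ∧
    (∀ i j, i ≠ j →
      ⟪(WithLp.equiv 2 (EuclideanSpace ℝ (Fin d) × EuclideanSpace ℝ (Fin (d - 1))) (D i)).2,
       (WithLp.equiv 2 (EuclideanSpace ℝ (Fin d) × EuclideanSpace ℝ (Fin (d - 1))) (D j)).2⟫
        < 0) := by
  simp only [WithLp.equiv_apply, WithLp.ofLp_fst, WithLp.ofLp_snd] at hproj ⊢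
  refine ⟨fun k ↦ WithLp.prod_snd_ne_zero_of_norm_fst_lt ?_, fun i j hij ↦ ?_⟩
  · rw [hproj, norm_smul, hnorm, mul_one, Real.norm_eq_abs, hDnorm]
    exact ha k
  have hd_pos : (0 : ℝ) < d := Nat.cast_pos.2 (by omega)
  calc ⟪(D i).snd, (D j).snd⟫ = -s ^ 2 / d - a i * a j * (-1 / d) := by
        rw [WithLp.prod_inner_snd, hDinner i j hij, hproj, hproj, real_inner_smul_left,
          real_inner_smul_right, hinner i j hij, mul_assoc]
    _ = (a i * a j - s ^ 2) / d := by ring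
    _ < 0 := div_neg_of_neg_of_pos (sub_neg.2 (mul_lt_sq_of_abs_lt (ha i) (ha j))) hd_pos

theorem projections_pairwise_obtuse (d : ℕ) (hd : 2 ≤ d) (s : ℝ) (hs : 0 < s)
    (u : Fin (d + 1) → EuclideanSpace ℝ (Fin d))
    (hnorm : ∀ i, ‖u i‖ = 1)
    (hinner : ∀ i j, i ≠ j → ⟪u i, u j⟫ = -1 / d)
    (D : Fin (d + 1) → WithLp 2 (EuclideanSpace ℝ (Fin d) × EuclideanSpace ℝ (Fin (d - 1))))
    (a : Fin (d + 1) → ℝ)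
    (hDnorm : ∀ k, ‖D k‖ = s)
    (hDinner : ∀ k j, k ≠ j → ⟪D k, D j⟫ = -s ^ 2 / d)
    (hproj : ∀ k, (WithLp.equiv 2
      (EuclideanSpace ℝ (Fin d) × EuclideanSpace ℝ (Fin (d - 1))) (D k)).1 = a k • u k)
    (ha : ∀ k, |a k| < s) :
    (∀ k, (WithLp.equiv 2
      (EuclideanSpace ℝ (Fin d) × EuclideanSpace ℝ (Fin (d - 1))) (D k)).2 ≠ 0) ∧
    (∀ i j, i ≠ j →
      ⟪(WithLp.equiv 2 (EuclideanSpace ℝ (Fin d) × EuclideanSpace ℝ (Fin (d - 1))) (D i)).2,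
       (WithLp.equiv 2 (EuclideanSpace ℝ (Fin d) × EuclideanSpace ℝ (Fin (d - 1))) (D j)).2⟫
        < 0) :=
  projections_pairwise_obtuse_general d hd s u hnorm hinner D a hDnorm hDinner hproj ha
end

section
/- Let a, b, c, d ∈ E^n with (a, b, c, d) a rectangle (i.e., a parallelogram with b - a perpendicular to d - a), and let a', b', c', d' ∈ E^n satisfy all the same pairwise distances. Then c' - b' = d' - a'; i.e., the corresponding displacement vectors of opposite sides agree. -/
open scoped RealInnerProductSpace

lemma key_norm_identity (n : ℕ) (x y z w : EuclideanSpace ℝ (Fin n)) :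
    ‖(z - y) - (w - x)‖ ^ 2 =
      ‖z - y‖ ^ 2 + ‖w - x‖ ^ 2 - ‖z - x‖ ^ 2 - ‖y - w‖ ^ 2 + ‖z - w‖ ^ 2 + ‖y - x‖ ^ 2 := by
  simp only [← real_inner_self_eq_norm_sq, inner_sub_left, inner_sub_right]
  rw [real_inner_comm x y, real_inner_comm x z, real_inner_comm x w, real_inner_comm y z,
    real_inner_comm y w, real_inner_comm z w]
  ring

theorem rectangle_rigidity (n : ℕ)
    (a b c d a' b' c' d' : EuclideanSpace ℝ (Fin n))
    (hpara : b - a = c - d)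
    (hperp : ⟪b - a, d - a⟫ = 0)
    (hab : ‖a' - b'‖ = ‖a - b‖) (hac : ‖a' - c'‖ = ‖a - c‖)
    (had : ‖a' - d'‖ = ‖a - d‖) (hbc : ‖b' - c'‖ = ‖b - c‖)
    (hbd : ‖b' - d'‖ = ‖b - d‖) (hcd : ‖c' - d'‖ = ‖c - d‖) :
    c' - b' = d' - a' := by
  have e : c - b = d - a := by
    rw [sub_eq_sub_iff_sub_eq_sub]
    exact hpara.symm
  have h1 : ‖c' - b'‖ = ‖c - b‖ := by rw [norm_sub_rev, hbc, norm_sub_rev]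
  have h2 : ‖d' - a'‖ = ‖d - a‖ := by rw [norm_sub_rev, had, norm_sub_rev]
  have h3 : ‖c' - a'‖ = ‖c - a‖ := by rw [norm_sub_rev, hac, norm_sub_rev]
  have h4 : ‖b' - a'‖ = ‖b - a‖ := by rw [norm_sub_rev, hab, norm_sub_rev]
  have h0 : ‖(c' - b') - (d' - a')‖ ^ 2 = ‖(c - b) - (d - a)‖ ^ 2 := by
    rw [key_norm_identity, key_norm_identity, h1, h2, h3, h4, hbd, hcd]
  rw [e, sub_self, norm_zero] at h0
  have := pow_eq_zero_iff (n := 2) (by norm_num) |>.mp (by linarith [h0] : ‖(c' - b') - (d' - a')‖ ^ 2 = 0)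
  exact sub_eq_zero.mp (norm_eq_zero.mp this)
end

section
/- If u_1, ..., u_{n+2} are vectors in E^{n+1} that are pairwise obtuse (u_i · u_j < 0 for i ≠ j) and u_{n+3} = -e_1, with u_i · u_{n+3} < 0 for all i ≤ n+2, then the projections of u_1, ..., u_{n+2} onto the orthogonal complement of e_1 are pairwise obtuse vectors in E^n. -/
open scoped RealInnerProductSpace

namespace EuclideanSpace

/-- The projection `π_2` of `E^{n+1} = E^1 × E^n` onto `E^n`. -/
noncomputable def tail {n : ℕ} (x : EuclideanSpace ℝ (Fin (n + 1))) : EuclideanSpace ℝ (Fin n) :=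
  WithLp.toLp 2 fun m => x m.succ

theorem inner_eq_mul_add_inner_tail {n : ℕ} (x y : EuclideanSpace ℝ (Fin (n + 1))) :
    ⟪x, y⟫ = x 0 * y 0 + ⟪tail x, tail y⟫ := by
  simp only [tail, PiLp.inner_apply, RCLike.inner_apply, conj_trivial,
    Fin.sum_univ_succ]
  ring

theorem inner_tail_neg_of_inner_neg {n : ℕ} {x y : EuclideanSpace ℝ (Fin (n + 1))}
    (hxy : ⟪x, y⟫ < 0) (hx : 0 < x 0) (hy : 0 < y 0) : ⟪tail x, tail y⟫ < 0 := by
  rw [inner_eq_mul_add_inner_tail] at hxy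
  linarith [mul_pos hx hy]

end EuclideanSpace

theorem projection_preserves_obtuse (n : ℕ)
    (u : Fin (n + 2) → EuclideanSpace ℝ (Fin (n + 1)))
    (hobtuse : ∀ i j, i ≠ j → ⟪u i, u j⟫ < 0)
    (hfirst : ∀ i, 0 < u i 0) :
    ∀ i j, i ≠ j →
      ⟪(show EuclideanSpace ℝ (Fin n) from WithLp.toLp 2 (fun m : Fin n => u i m.succ)),
       (show EuclideanSpace ℝ (Fin n) from WithLp.toLp 2 (fun m : Fin n => u j m.succ))⟫ < 0 :=
  fun i j hij =>
    EuclideanSpace.inner_tail_neg_of_inner_neg (hobtuse i j hij) (hfirst i) (hfirst j)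
end
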